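/- arXiv:2005.05593 — 4 statements merged into one kernel-verified Lean document; each statement's English description precedes it below -/
import Mathlib

section
/- For every n ≥ 5, the polynomial p_n satisfies the recursion p_n = p_{n-2} + z_n·(p_{n-1} + 2) if n is odd, and p_n = p_{n-2} + z_n·(p_{n-1} + 1) if n is even, where p_3 = z1 + z3 + z1*z3*z2 - 1 and p_4 = z1*z2 - 1 + z4*(z1 + z3 + z1*z3*z2), and p_n equals (M_n)_{2,1} - 1 for odd n and (M_n)_{2,2} - 2 for even n. -/
noncomputable section
open Matrix

def Lm (z : ℂ) : Matrix (Fin 2) (Fin 2) ℂ := !![1, 0; z, 1]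
def Um (z : ℂ) : Matrix (Fin 2) (Fin 2) ℂ := !![1, z; 0, 1]

def Mmat : ℕ → (ℕ → ℂ) → Matrix (Fin 2) (Fin 2) ℂ
  | 0, _ => 1
  | 1, _ => 1
  | 2, _ => 1
  | 3, z => Lm (z 1) * Um (z 2) * Lm (z 3)
  | (n+4), z => Mmat (n+3) z * (if (n+4) % 2 = 1 then Lm (z (n+4)) else Um (z (n+4)))

def pol : ℕ → (ℕ → ℂ) → ℂ
  | 0, _ => 0
  | 1, _ => 0
  | 2, _ => 0
  | 3, z => z 1 + z 3 + z 1 * z 3 * z 2 - 1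
  | 4, z => z 1 * z 2 - 1 + z 4 * (z 1 + z 3 + z 1 * z 3 * z 2)
  | (n+5), z => pol (n+3) z + z (n+5) * (pol (n+4) z + if (n+5) % 2 = 1 then 2 else 1)

def ext (n : ℕ) (z : Fin n → ℂ) : ℕ → ℂ :=
  fun i => if h : 1 ≤ i ∧ i ≤ n then z ⟨i - 1, by omega⟩ else 0

def P (n : ℕ) (z : Fin n → ℂ) : ℂ := pol n (ext n z)

def Xset (n : ℕ) : Set (Fin n → ℂ) := {z | P n z = 0}

def X0set (n : ℕ) : Set (Fin n → ℂ) :=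
  {z | P n z + (if n % 2 = 1 then 2 else 1) = 0}


lemma aux_entries : ∀ n, 4 ≤ n → ∀ z : ℕ → ℂ,
    (n % 2 = 0 → Mmat n z 1 0 = pol (n-1) z + 1 ∧ Mmat n z 1 1 = pol n z + 2) ∧
    (n % 2 = 1 → Mmat n z 1 0 = pol n z + 1 ∧ Mmat n z 1 1 = pol (n-1) z + 2) := by
  intro n hn
  induction n, hn using Nat.le_induction with
  | base =>
    intro z
    refine ⟨fun _ => ?_, fun h => by omega⟩
    constructor <;>
      · show (Mmat 3 z * Um (z 4)) _ _ = _
        simp [Mmat, Lm, Um, pol, Matrix.mul_apply, Fin.sum_univ_two]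
        ring
  | succ n hn ih =>
    intro z
    obtain ⟨k, rfl⟩ : ∃ k, n = k + 4 := ⟨n-4, by omega⟩
    obtain ⟨h0, h1⟩ := ih z
    have hM : Mmat (k+5) z = Mmat (k+4) z *
        (if (k+5) % 2 = 1 then Lm (z (k+5)) else Um (z (k+5))) := rfl
    have hpol : pol (k+5) z = pol (k+3) z + z (k+5) *
        (pol (k+4) z + if (k+5) % 2 = 1 then 2 else 1) := rfl
    rcases Nat.even_or_odd (k+4) with he | ho
    · have e0 : (k+4) % 2 = 0 := Nat.even_iff.mp he
      have e1 : (k+5) % 2 = 1 := by omega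
      obtain ⟨ha, hb⟩ := h0 e0
      refine ⟨fun h => by omega, fun _ => ?_⟩
      rw [hM, e1, if_pos rfl]
      rw [e1, if_pos rfl] at hpol
      constructor <;>
        · simp [Lm, Matrix.mul_apply, Fin.sum_univ_two, ha, hb, hpol]
          try ring
    · have e0 : (k+4) % 2 = 1 := Nat.odd_iff.mp ho
      have e1 : (k+5) % 2 = 0 := by omega
      obtain ⟨ha, hb⟩ := h1 e0
      refine ⟨fun _ => ?_, fun h => by omega⟩
      rw [hM, e1, if_neg (by omega : ¬ (0:ℕ) = 1)]
      rw [e1, if_neg (by omega : ¬ (0:ℕ) = 1)] at hpol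
      constructor <;>
        · simp [Um, Matrix.mul_apply, Fin.sum_univ_two, ha, hb, hpol]
          try ring

theorem stmt7 (n : ℕ) (hn : 5 ≤ n) (z : ℕ → ℂ) :
    (n % 2 = 1 →
      pol n z = pol (n - 2) z + z n * (pol (n - 1) z + 2) ∧
      pol n z = Mmat n z 1 0 - 1) ∧
    (n % 2 = 0 →
      pol n z = pol (n - 2) z + z n * (pol (n - 1) z + 1) ∧
      pol n z = Mmat n z 1 1 - 2) := by
  obtain ⟨k, rfl⟩ : ∃ k, n = k + 5 := ⟨n-5, by omega⟩
  have hpol : pol (k+5) z = pol (k+3) z + z (k+5) *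
      (pol (k+4) z + if (k+5) % 2 = 1 then 2 else 1) := rfl
  have h3 : k + 5 - 2 = k + 3 := rfl
  have h4 : k + 5 - 1 = k + 4 := rfl
  obtain ⟨hA, hB⟩ := aux_entries (k+5) (by omega) z
  constructor
  · intro h
    rw [if_pos h] at hpol
    refine ⟨by rw [h3, h4]; exact hpol, ?_⟩
    have := (hB h).1
    rw [this]; ring
  · intro h
    have h' : ¬ ((k+5) % 2 = 1) := by omega
    rw [if_neg h'] at hpol
    refine ⟨by rw [h3, h4]; exact hpol, ?_⟩
    have := (hA h).2
    rw [this]; ring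
end
end

section
/- For every odd n ≥ 5, the center C_n = {(z1,…,z_{n-1}) ∈ ℂ^{n-1} : p_{n-2} = 0 and p_{n-1} + 2 = 0} is isomorphic to X_{n-2} = {p_{n-2} = 0} ⊂ ℂ^{n-2}, via the map sending (z1,…,z_{n-2}) ∈ X_{n-2} to (z1,…,z_{n-2}, z_{n-1}) with z_{n-1} determined by p_{n-1} + 2 = 0 (using that p_{n-1} = p_{n-3} + z_{n-1}(p_{n-2}+1) and p_{n-2} = 0 forces a unique linear solution for z_{n-1}). -/
noncomputable section
open Matrix

lemma pol_congr : ∀ (n : ℕ) (z z' : ℕ → ℂ), (∀ i, 1 ≤ i → i ≤ n → z i = z' i) →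
    pol n z = pol n z'
  | 0, _, _, _ => rfl
  | 1, _, _, _ => rfl
  | 2, _, _, _ => rfl
  | 3, z, z', h => by
      simp only [pol, h 1 (by omega) (by omega), h 2 (by omega) (by omega),
        h 3 (by omega) (by omega)]
  | 4, z, z', h => by
      simp only [pol, h 1 (by omega) (by omega), h 2 (by omega) (by omega),
        h 3 (by omega) (by omega), h 4 (by omega) (by omega)]
  | (n+5), z, z', h => by
      simp only [pol]
      rw [pol_congr (n+3) z z' fun i h1 h2 => h i h1 (by omega),
        pol_congr (n+4) z z' fun i h1 h2 => h i h1 (by omega),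
        h (n+5) (by omega) (by omega)]

lemma pol_rec (n : ℕ) (z : ℕ → ℂ) :
    pol (n+5) z = pol (n+3) z + z (n+5) * (pol (n+4) z + if (n+5) % 2 = 1 then 2 else 1) :=
  rfl

lemma pol_update (m : ℕ) (z : ℕ → ℂ) (t : ℂ) :
    pol (2*m+4) (Function.update z (2*m+4) t)
      = pol (2*m+4) (Function.update z (2*m+4) 0) + t * (pol (2*m+3) z + 1) := by
  cases m with
  | zero =>
      show pol 4 (Function.update z 4 t)
        = pol 4 (Function.update z 4 0) + t * (pol 3 z + 1)
      simp only [pol, Function.update_apply]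
      norm_num
      try ring
  | succ m =>
      have h1 : 2*(m+1)+4 = 2*m+1+5 := by ring
      have h2 : 2*(m+1)+3 = 2*m+1+4 := by ring
      rw [h1, h2]
      have e1 : ∀ s : ℂ, pol (2*m+1+3) (Function.update z (2*m+1+5) s)
          = pol (2*m+1+3) z := fun s =>
        pol_congr _ _ _ fun i _ hi => Function.update_of_ne (by omega) _ _
      have e2 : ∀ s : ℂ, pol (2*m+1+4) (Function.update z (2*m+1+5) s)
          = pol (2*m+1+4) z := fun s =>
        pol_congr _ _ _ fun i _ hi => Function.update_of_ne (by omega) _ _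
      rw [pol_rec (2*m+1) (Function.update z (2*m+1+5) t),
        pol_rec (2*m+1) (Function.update z (2*m+1+5) 0),
        e1, e1, e2, e2, Function.update_self, Function.update_self,
        if_neg (show ¬((2*m+1+5) % 2 = 1) by omega)]
      ring

def extv (k : ℕ) (v : Fin (2*k+3) → ℂ) (t : ℂ) : Fin (2*k+4) → ℂ :=
  fun i => if h : (i : ℕ) < 2*k+3 then v ⟨i, h⟩ else t

lemma extv_castLE (k : ℕ) (v : Fin (2*k+3) → ℂ) (t : ℂ) (i : Fin (2*k+3)) :
    extv k v t (Fin.castLE (Nat.le_succ _) i) = v i := by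
  simp only [extv, Fin.coe_castLE]
  rw [dif_pos i.isLt]

lemma ext_pos (n : ℕ) (z : Fin n → ℂ) {i : ℕ} (h1 : 1 ≤ i) (h2 : i ≤ n) :
    ext n z i = z ⟨i - 1, by omega⟩ := dif_pos ⟨h1, h2⟩

lemma ext_neg (n : ℕ) (z : Fin n → ℂ) {i : ℕ} (h : ¬(1 ≤ i ∧ i ≤ n)) :
    ext n z i = 0 := dif_neg h

lemma extv_lt (k : ℕ) (v : Fin (2*k+3) → ℂ) (t : ℂ) {j : ℕ} (hj : j < 2*k+4)
    (hj' : j < 2*k+3) : extv k v t ⟨j, hj⟩ = v ⟨j, hj'⟩ := dif_pos hj'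

lemma extv_ge (k : ℕ) (v : Fin (2*k+3) → ℂ) (t : ℂ) {j : ℕ} (hj : j < 2*k+4)
    (hj' : ¬ j < 2*k+3) : extv k v t ⟨j, hj⟩ = t := dif_neg hj'

lemma ext_extv (k : ℕ) (v : Fin (2*k+3) → ℂ) (t : ℂ) :
    ext (2*k+4) (extv k v t) = Function.update (ext (2*k+4) (extv k v 0)) (2*k+4) t := by
  funext i
  rcases eq_or_ne i (2*k+4) with rfl | hne
  · rw [Function.update_self, ext_pos _ _ (by omega) (le_refl _),
      extv_ge k v t (by omega) (by omega)]
  · rw [Function.update_of_ne hne]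
    by_cases h1 : 1 ≤ i ∧ i ≤ 2*k+4
    · calc ext (2*k+4) (extv k v t) i = extv k v t ⟨i-1, by omega⟩ :=
            ext_pos _ _ h1.1 h1.2
        _ = v ⟨i-1, by omega⟩ := extv_lt k v t (by omega) (by omega)
        _ = extv k v 0 ⟨i-1, by omega⟩ := (extv_lt k v 0 (by omega) (by omega)).symm
        _ = ext (2*k+4) (extv k v 0) i := (ext_pos _ _ h1.1 h1.2).symm
    · rw [ext_neg _ _ h1, ext_neg _ _ h1]

lemma pol_restrict (k : ℕ) (v : Fin (2*k+3) → ℂ) (t : ℂ) :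
    pol (2*k+3) (ext (2*k+4) (extv k v t)) = P (2*k+3) v := by
  refine pol_congr _ _ _ fun i h1 h2 => ?_
  calc ext (2*k+4) (extv k v t) i = extv k v t ⟨i-1, by omega⟩ :=
        ext_pos _ _ h1 (by omega)
    _ = v ⟨i-1, by omega⟩ := extv_lt k v t (by omega) (by omega)
    _ = ext (2*k+3) v i := (ext_pos _ _ h1 h2).symm

lemma key (k : ℕ) (v : Fin (2*k+3) → ℂ) (t : ℂ) :
    P (2*k+4) (extv k v t) = P (2*k+4) (extv k v 0) + t * (P (2*k+3) v + 1) := by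
  show pol (2*k+4) (ext (2*k+4) (extv k v t)) = _
  rw [ext_extv, pol_update k _ t]
  have hupd : Function.update (ext (2*k+4) (extv k v 0)) (2*k+4) (0 : ℂ)
      = ext (2*k+4) (extv k v 0) := by
    funext j
    rcases eq_or_ne j (2*k+4) with rfl | hne
    · rw [Function.update_self, ext_pos _ _ (by omega) (le_refl _),
        extv_ge k v 0 (by omega) (by omega)]
    · rw [Function.update_of_ne hne]
  rw [hupd, pol_restrict]
  rfl

lemma restrict_extv (k : ℕ) (v : Fin (2*k+3) → ℂ) (t : ℂ) :
    (fun i => extv k v t (Fin.castLE (Nat.le_succ _) i)) = v :=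
  funext fun i => extv_castLE k v t i

lemma extv_self (k : ℕ) (w : Fin (2*k+4) → ℂ) :
    extv k (fun i => w (Fin.castLE (Nat.le_succ _) i)) (w ⟨2*k+3, by omega⟩) = w := by
  funext i
  simp only [extv]
  split_ifs with h
  · exact congrArg w (Fin.ext rfl)
  · refine congrArg w (Fin.ext ?_)
    have := i.isLt
    show 2*k+3 = (i : ℕ)
    omega

theorem stmt10 (k : ℕ) :
    ∃ e : {v : Fin (2 * k + 3) → ℂ // P (2 * k + 3) v = 0} ≃
        {w : Fin (2 * k + 4) → ℂ //
          P (2 * k + 3) (fun i => w (Fin.castLE (by omega) i)) = 0 ∧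
          P (2 * k + 4) w + 2 = 0},
      ∀ (v : {v : Fin (2 * k + 3) → ℂ // P (2 * k + 3) v = 0}) (i : Fin (2 * k + 3)),
        (e v).val (Fin.castLE (by omega) i) = v.val i := by
  refine ⟨⟨
    fun v => ⟨extv k v.val (-(P (2*k+4) (extv k v.val 0) + 2)), ?_, ?_⟩,
    fun w => ⟨fun i => w.val (Fin.castLE (by omega) i), w.2.1⟩,
    ?_, ?_⟩, ?_⟩
  · rw [restrict_extv]; exact v.2
  · rw [key, v.2]; ring
  · intro v
    apply Subtype.ext
    exact restrict_extv k v.val _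
  · intro w
    apply Subtype.ext
    show extv k _ _ = w.val
    have hw : extv k (fun i => w.val (Fin.castLE (by omega) i)) (w.val ⟨2*k+3, by omega⟩)
        = w.val := extv_self k w.val
    have h4 := w.2.2
    rw [← hw, key, w.2.1] at h4
    have ht : w.val ⟨2*k+3, by omega⟩
        = -(P (2*k+4) (extv k (fun i => w.val (Fin.castLE (by omega) i)) 0) + 2) := by
      linear_combination h4
    rw [← ht]
    exact hw
  · intro v i
    exact extv_castLE k v.val _ i
end
end

section
/- For every n ≥ 3, the hypersurface X_n = {p_n = 0} ⊂ ℂⁿ is smooth: at every point of X_n at least one partial derivative ∂p_n/∂z_i is nonzero. -/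
noncomputable section
open Matrix

def Dp (n i : ℕ) (w : ℕ → ℂ) : ℂ :=
  pol n (Function.update w i 1) - pol n (Function.update w i 0)

lemma pol_update_of_out (n i : ℕ) (hi : i = 0 ∨ n < i) (w : ℕ → ℂ) (t : ℂ) :
    pol n (Function.update w i t) = pol n w := by
  induction n using Nat.strong_induction_on generalizing i with
  | _ n ih =>
    match n with
    | 0 | 1 | 2 => simp [pol]
    | 3 =>
      have h1 : (1:ℕ) ≠ i := by omega
      have h2 : (2:ℕ) ≠ i := by omega
      have h3 : (3:ℕ) ≠ i := by omega
      simp [pol, Function.update_of_ne h1, Function.update_of_ne h2,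
        Function.update_of_ne h3]
    | 4 =>
      have h1 : (1:ℕ) ≠ i := by omega
      have h2 : (2:ℕ) ≠ i := by omega
      have h3 : (3:ℕ) ≠ i := by omega
      have h4 : (4:ℕ) ≠ i := by omega
      simp [pol, Function.update_of_ne h1, Function.update_of_ne h2,
        Function.update_of_ne h3, Function.update_of_ne h4]
    | n + 5 =>
      have h5 : (n+5:ℕ) ≠ i := by omega
      simp only [pol, Function.update_of_ne h5,
        ih (n+3) (by omega) i (by omega), ih (n+4) (by omega) i (by omega)]

lemma pol_affine (n i : ℕ) (w : ℕ → ℂ) (t : ℂ) :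
    pol n (Function.update w i t) =
      pol n (Function.update w i 0) + t * Dp n i w := by
  unfold Dp
  induction n using Nat.strong_induction_on generalizing i with
  | _ n ih =>
    match n with
    | 0 | 1 | 2 => simp [pol]
    | 3 =>
      rcases (by omega : i = 1 ∨ i = 2 ∨ i = 3 ∨ (i = 0 ∨ 3 < i)) with h|h|h|h
      · subst h; simp [pol, Function.update_apply]; try ring
      · subst h; simp [pol, Function.update_apply]; try ring
      · subst h; simp [pol, Function.update_apply]; try ring
      · rw [pol_update_of_out 3 i h, pol_update_of_out 3 i h,
          pol_update_of_out 3 i h]; ring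
    | 4 =>
      rcases (by omega : i = 1 ∨ i = 2 ∨ i = 3 ∨ i = 4 ∨ (i = 0 ∨ 4 < i)) with h|h|h|h|h
      · subst h; simp [pol, Function.update_apply]; try ring
      · subst h; simp [pol, Function.update_apply]; try ring
      · subst h; simp [pol, Function.update_apply]; try ring
      · subst h; simp [pol, Function.update_apply]; try ring
      · rw [pol_update_of_out 4 i h, pol_update_of_out 4 i h,
          pol_update_of_out 4 i h]; ring
    | n + 5 =>
      by_cases h5 : i = n + 5
      · subst h5
        simp only [pol, Function.update_self,
          pol_update_of_out (n+3) (n+5) (by omega),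
          pol_update_of_out (n+4) (n+5) (by omega)]
        ring
      · have h5' : (n+5:ℕ) ≠ i := fun h => h5 h.symm
        simp only [pol, Function.update_of_ne h5',
          ih (n+3) (by omega) i, ih (n+4) (by omega) i]
        ring

lemma deriv_pol (n i : ℕ) (w : ℕ → ℂ) (s : ℂ) :
    deriv (fun t : ℂ => pol n (Function.update w i t)) s = Dp n i w := by
  have h : (fun t : ℂ => pol n (Function.update w i t)) =
      fun t : ℂ => pol n (Function.update w i 0) + t * Dp n i w :=
    funext fun t => pol_affine n i w t
  rw [h]
  have : HasDerivAt (fun t : ℂ => pol n (Function.update w i 0) + t * Dp n i w)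
      (Dp n i w) s := by
    simpa using ((hasDerivAt_id s).mul_const (Dp n i w)).const_add
      (pol n (Function.update w i 0))
  exact this.deriv

lemma Dp_out (n i : ℕ) (hi : i = 0 ∨ n < i) (w : ℕ → ℂ) : Dp n i w = 0 := by
  simp [Dp, pol_update_of_out n i hi]

lemma Dp_top (n : ℕ) (hn : 4 ≤ n) (w : ℕ → ℂ) :
    Dp n n w = pol (n-1) w + (if n % 2 = 1 then 2 else 1) := by
  rcases (show n = 4 ∨ 5 ≤ n by omega) with rfl | h5
  · simp [Dp, pol, Function.update_apply]
    try ring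
  obtain ⟨m, rfl⟩ : ∃ m, n = m + 5 := ⟨n - 5, by omega⟩
  simp only [Dp, pol, Function.update_self,
    pol_update_of_out (m+3) (m+5) (by omega),
    pol_update_of_out (m+4) (m+5) (by omega)]
  have : m + 5 - 1 = m + 4 := by omega
  rw [this]; ring

lemma Dp_rec (n i : ℕ) (hn : 5 ≤ n) (hi : i ≠ n) (w : ℕ → ℂ) :
    Dp n i w = Dp (n-2) i w + w n * Dp (n-1) i w := by
  obtain ⟨m, rfl⟩ : ∃ m, n = m + 5 := ⟨n - 5, by omega⟩
  have h5' : (m+5:ℕ) ≠ i := fun h => hi h.symm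
  have e1 : m + 5 - 2 = m + 3 := by omega
  have e2 : m + 5 - 1 = m + 4 := by omega
  rw [e1, e2]
  simp only [Dp, pol, Function.update_of_ne h5']
  ring

lemma key_s11 : ∀ n : ℕ, 3 ≤ n → ∀ w : ℕ → ℂ, pol n w = 0 →
    ∃ i, 1 ≤ i ∧ i ≤ n ∧ Dp n i w ≠ 0 := by
  intro n
  induction n using Nat.strong_induction_on with
  | _ n ih =>
    intro hn w hz
    by_contra hc
    push_neg at hc
    have hcase : n = 3 ∨ n = 4 ∨ ∃ m, n = m + 5 := by
      rcases (show n = 3 ∨ n = 4 ∨ 5 ≤ n by omega) with h | h | h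
      · exact Or.inl h
      · exact Or.inr (Or.inl h)
      · exact Or.inr (Or.inr ⟨n - 5, by omega⟩)
    rcases hcase with rfl | rfl | ⟨m, rfl⟩
    · have h1 := hc 1 (by norm_num) (by norm_num)
      have h2 := hc 2 (by norm_num) (by norm_num)
      have h3 := hc 3 (by norm_num) (by norm_num)
      simp [Dp, pol, Function.update_apply] at h1 h2 h3
      rcases h2 with h | h
      · rw [h] at h3; simp at h3
      · rw [h] at h1; simp at h1
    · have h1 := hc 1 (by norm_num) (by norm_num)
      have h2 := hc 2 (by norm_num) (by norm_num)
      have h3 := hc 3 (by norm_num) (by norm_num)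
      have h4 := hc 4 (by norm_num) (by norm_num)
      simp [Dp, pol, Function.update_apply] at h1 h2 h3 h4
      simp [pol] at hz
      have e1 : w 2 * w 1 = 1 := by linear_combination hz - w 4 * h4
      have e2 : w 4 = 0 := by linear_combination h3/2 - (w 4/2) * e1
      have e3 : w 2 = 0 := by linear_combination h1 - (1 + w 2 * w 3) * e2
      exact one_ne_zero (by linear_combination -e1 + w 1 * e3 : (1:ℂ) = 0)
    · have htop := hc (m+5) (by omega) le_rfl
      rw [Dp_top (m+5) (by omega) w] at htop
      have e45 : m + 5 - 1 = m + 4 := by omega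
      rw [e45] at htop
      -- pol (m+4) w + c = 0
      have hz' : pol (m+3) w = 0 := by
        have : pol (m+5) w = pol (m+3) w + w (m+5) *
            (pol (m+4) w + if (m+5) % 2 = 1 then 2 else 1) := by simp [pol]
        rw [hz, htop, mul_zero, add_zero] at this
        exact this.symm
      have hsub := hc (m+4) (by omega) (by omega)
      rw [Dp_rec (m+5) (m+4) (by omega) (by omega) w] at hsub
      have e3' : m + 5 - 2 = m + 3 := by omega
      rw [e3', e45] at hsub
      rw [Dp_out (m+3) (m+4) (Or.inr (by omega)) w, Dp_top (m+4) (by omega) w] at hsub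
      have e34 : m + 4 - 1 = m + 3 := by omega
      rw [e34, hz', zero_add, zero_add] at hsub
      have hc' : (if (m+4) % 2 = 1 then (2:ℂ) else 1) ≠ 0 := by
        split <;> norm_num
      have hw5 : w (m+5) = 0 := by
        rcases mul_eq_zero.mp hsub with h | h
        · exact h
        · exact absurd h hc'
      obtain ⟨i, hi1, hi2, hD⟩ := ih (m+3) (by omega) (by omega) w hz'
      apply hD
      have := hc i hi1 (by omega)
      rw [Dp_rec (m+5) i (by omega) (by omega) w, e3', e45, hw5, zero_mul,
        add_zero] at this
      exact this

lemma ext_update (n i : ℕ) (hi : 1 ≤ i ∧ i ≤ n) (z : Fin n → ℂ) (t : ℂ) :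
    _root_.ext n (Function.update z ⟨i - 1, by omega⟩ t) = Function.update (_root_.ext n z) i t := by
  funext j
  unfold _root_.ext
  rcases eq_or_ne j i with rfl | hj
  · rw [Function.update_self, dif_pos hi, Function.update_self]
  · rw [Function.update_of_ne hj]
    by_cases h : 1 ≤ j ∧ j ≤ n
    · rw [dif_pos h, dif_pos h, Function.update_of_ne]
      simp only [ne_eq, Fin.mk.injEq]
      omega
    · rw [dif_neg h, dif_neg h]

theorem stmt11 (n : ℕ) (hn : 3 ≤ n) (z : Fin n → ℂ) (hz : P n z = 0) :
    ∃ i : Fin n, deriv (fun t : ℂ => P n (Function.update z i t)) (z i) ≠ 0 := by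
  obtain ⟨i, hi1, hi2, hD⟩ := key_s11 n hn (_root_.ext n z) hz
  refine ⟨⟨i - 1, by omega⟩, ?_⟩
  have hfun : (fun t : ℂ => P n (Function.update z ⟨i - 1, by omega⟩ t)) =
      fun t : ℂ => pol n (Function.update (_root_.ext n z) i t) := by
    funext t
    rw [P, ext_update n i ⟨hi1, hi2⟩ z t]
  rw [hfun, deriv_pol]
  exact hD
end
end

section
/- For every n ≥ 3, the hypersurface X_n = {p_n = 0} ⊂ ℂⁿ is (path-)connected. -/
noncomputable section
open Matrix

/-! ### Auxiliary development -/

/-- Extended polynomial family: `qq n = pol n` for `n ≥ 3`, with modified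
small cases making the recursion uniform. -/
def qq : ℕ → (ℕ → ℂ) → ℂ
  | 0, _ => -1
  | 1, z => z 1 - 1
  | 2, z => z 1 * z 2 - 1
  | (n+3), z => pol (n+3) z

def cc (n : ℕ) : ℂ := if n % 2 = 1 then 2 else 1

lemma cc_ne_zero (n : ℕ) : cc n ≠ 0 := by unfold cc; split <;> norm_num

lemma qq_rec (n : ℕ) (z : ℕ → ℂ) :
    qq (n+2) z = qq n z + z (n+2) * (qq (n+1) z + cc (n+2)) := by
  match n with
  | 0 => show z 1 * z 2 - 1 = -1 + z 2 * ((z 1 - 1) + cc 2)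
         rw [show cc 2 = 1 by norm_num [cc]]; ring
  | 1 => show pol 3 z = (z 1 - 1) + z 3 * ((z 1 * z 2 - 1) + cc 3)
         rw [show cc 3 = 2 by norm_num [cc]]; show z 1 + z 3 + z 1 * z 3 * z 2 - 1 = _; ring
  | 2 => show pol 4 z = (z 1 * z 2 - 1) + z 4 * (pol 3 z + cc 4)
         rw [show cc 4 = 1 by norm_num [cc]]
         show z 1 * z 2 - 1 + z 4 * (z 1 + z 3 + z 1 * z 3 * z 2) =
           z 1 * z 2 - 1 + z 4 * (z 1 + z 3 + z 1 * z 3 * z 2 - 1 + 1); ring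
  | (k+3) =>
    show pol (k+5) z = pol (k+3) z + z (k+5) * (pol (k+4) z + cc (k+5))
    rw [show pol (k+5) z = pol (k+3) z + z (k+5) *
        (pol (k+4) z + if (k+5) % 2 = 1 then 2 else 1) from rfl]
    rfl

lemma qq_congr : ∀ (n : ℕ) (w w' : ℕ → ℂ),
    (∀ i, 1 ≤ i → i ≤ n → w i = w' i) → qq n w = qq n w' := by
  intro n
  induction n using Nat.strong_induction_on with
  | _ n ih =>
    match n, ih with
    | 0, _ => intro w w' _; rfl
    | 1, _ => intro w w' h; show w 1 - 1 = w' 1 - 1; rw [h 1 le_rfl le_rfl]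
    | (k+2), ih =>
      intro w w' h
      rw [qq_rec, qq_rec,
        ih k (by omega) w w' (fun i h1 h2 => h i h1 (by omega)),
        ih (k+1) (by omega) w w' (fun i h1 h2 => h i h1 (by omega)),
        h (k+2) (by omega) le_rfl]

lemma qq_continuous : ∀ n : ℕ, Continuous (qq n) := by
  intro n
  induction n using Nat.strong_induction_on with
  | _ n ih =>
    match n, ih with
    | 0, _ => exact continuous_const
    | 1, _ => exact (continuous_apply 1).sub continuous_const
    | (k+2), ih =>
      have h : qq (k+2) = fun z => qq k z + z (k+2) * (qq (k+1) z + cc (k+2)) :=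
        funext (qq_rec k)
      rw [h]
      exact (ih k (by omega)).add ((continuous_apply (k+2)).mul
        ((ih (k+1) (by omega)).add continuous_const))

lemma qq_line_poly : ∀ (n : ℕ) (a b : ℕ → ℂ), ∃ G : Polynomial ℂ,
    ∀ t : ℂ, qq n (fun i => a i + t * (b i - a i)) = G.eval t := by
  intro n
  induction n using Nat.strong_induction_on with
  | _ n ih =>
    match n, ih with
    | 0, _ => exact fun a b => ⟨Polynomial.C (-1), fun t => by simp [qq]⟩
    | 1, _ =>
      intro a b
      refine ⟨Polynomial.C (a 1 - 1) + Polynomial.C (b 1 - a 1) * Polynomial.X, fun t => ?_⟩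
      show a 1 + t * (b 1 - a 1) - 1 = _
      simp; ring
    | (k+2), ih =>
      intro a b
      obtain ⟨G1, hG1⟩ := ih k (by omega) a b
      obtain ⟨G2, hG2⟩ := ih (k+1) (by omega) a b
      refine ⟨G1 + (Polynomial.C (a (k+2)) + Polynomial.C (b (k+2) - a (k+2)) * Polynomial.X) *
        (G2 + Polynomial.C (cc (k+2))), fun t => ?_⟩
      rw [qq_rec, hG1, hG2]
      simp only [Polynomial.eval_add, Polynomial.eval_mul, Polynomial.eval_C, Polynomial.eval_X]
      ring

lemma joinedIn_of_exists {X : Type*} [TopologicalSpace X] {s : Set X} {x y : X}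
    (f : unitInterval → X) (hf : Continuous f) (h0 : f 0 = x) (h1 : f 1 = y)
    (hmem : ∀ t, f t ∈ s) : JoinedIn s x y := by
  subst h0; subst h1
  exact ⟨⟨⟨f, hf⟩, rfl, rfl⟩, hmem⟩

lemma complex_rank : 1 < Module.rank ℝ ℂ := by
  rw [Complex.rank_real_complex]; norm_num

lemma main_pc : ∀ n : ℕ, 1 ≤ n → IsPathConnected {w : ℕ → ℂ | qq n w = 0} := by
  intro n
  induction n using Nat.strong_induction_on with
  | _ n ih =>
    match n, ih with
    | 0, _ => intro h; exact absurd h (by norm_num)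
    | 1, _ =>
      intro _
      rw [isPathConnected_iff]
      refine ⟨⟨fun _ => 1, by show (1:ℂ) - 1 = 0; ring⟩, ?_⟩
      intro x hx y hy
      have hx1 : x 1 = 1 := by have : x 1 - 1 = 0 := hx; linear_combination this
      have hy1 : y 1 = 1 := by have : y 1 - 1 = 0 := hy; linear_combination this
      apply joinedIn_of_exists (f := fun t => fun i => x i + ((t:ℝ):ℂ) * (y i - x i))
      · exact continuous_pi fun i => continuous_const.add
          (((Complex.continuous_ofReal.comp continuous_subtype_val)).mul continuous_const)
      · funext i; simp
      · funext i; simp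
      · intro t
        show (x 1 + _ * (y 1 - x 1)) - 1 = 0
        rw [hx1, hy1]; ring
    | 2, _ =>
      intro _
      rw [isPathConnected_iff]
      refine ⟨⟨fun _ => 1, by show (1:ℂ) * 1 - 1 = 0; ring⟩, ?_⟩
      intro x hx y hy
      have hx2 : x 1 * x 2 = 1 := by have : x 1 * x 2 - 1 = 0 := hx; linear_combination this
      have hy2 : y 1 * y 2 = 1 := by have : y 1 * y 2 - 1 = 0 := hy; linear_combination this
      have hx1 : x 1 ≠ 0 := by intro h; rw [h] at hx2; simp at hx2
      have hy1 : y 1 ≠ 0 := by intro h; rw [h] at hy2; simp at hy2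
      have hpc : IsPathConnected ({0}ᶜ : Set ℂ) :=
        (Set.countable_singleton 0).isPathConnected_compl_of_one_lt_rank complex_rank
      obtain ⟨σ, hσ⟩ := hpc.joinedIn (x 1) hx1 (y 1) hy1
      have hσne : ∀ t, σ t ≠ 0 := fun t => hσ t
      apply joinedIn_of_exists
        (f := fun t => fun i => if i = 1 then σ t else if i = 2 then (σ t)⁻¹
          else x i + ((t:ℝ):ℂ) * (y i - x i))
      · refine continuous_pi fun i => ?_
        by_cases h1 : i = 1
        · simpa [h1] using σ.continuous
        by_cases h2 : i = 2
        · simp only [h1, h2, if_false, if_true]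
          exact σ.continuous.inv₀ hσne
        · simp only [h1, h2, if_false]
          exact continuous_const.add
            ((Complex.continuous_ofReal.comp continuous_subtype_val).mul continuous_const)
      · funext i
        by_cases h1 : i = 1
        · simp [h1]
        by_cases h2 : i = 2
        · subst h2
          rw [if_neg (by norm_num), if_pos rfl]
          show (σ 0)⁻¹ = x 2
          rw [σ.source]
          exact inv_eq_of_mul_eq_one_right hx2
        · simp [h1, h2]
      · funext i
        by_cases h1 : i = 1
        · simp [h1]
        by_cases h2 : i = 2
        · subst h2
          rw [if_neg (by norm_num), if_pos rfl]
          show (σ 1)⁻¹ = y 2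
          rw [σ.target]
          exact inv_eq_of_mul_eq_one_right hy2
        · simp [h1, h2]
      · intro t
        show (if (1:ℕ) = 1 then σ t else _) * (if (2:ℕ) = 1 then σ t
          else if (2:ℕ) = 2 then (σ t)⁻¹ else _) - 1 = 0
        simp [mul_inv_cancel₀ (hσne t)]
    | (k+3), ih =>
      intro _
      set X : Set (ℕ → ℂ) := {w | qq (k+3) w = 0} with hXdef
      have hA : ∀ w : ℕ → ℂ, qq (k+3) w = qq (k+1) w + w (k+3) * (qq (k+2) w + cc (k+3)) :=
        fun w => qq_rec (k+1) w
      have hIH : IsPathConnected {w : ℕ → ℂ | qq (k+1) w = 0} := ih (k+1) (by omega) (by omega)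
      obtain ⟨ws, hwsA, hwsn, hwsB⟩ : ∃ ws : ℕ → ℂ, qq (k+1) ws = 0 ∧ ws (k+3) = 0 ∧
          qq (k+2) ws + cc (k+3) = 1 := by
        obtain ⟨u, hu, -⟩ := id hIH
        have hu0 : qq (k+1) u = 0 := hu
        set K : ℂ := qq k (fun i => if i = k+3 then 0 else if i = k+2 then 0 else u i) +
          cc (k+3) with hKdef
        refine ⟨fun i => if i = k+3 then 0 else if i = k+2 then (1 - K) / cc (k+2) else u i,
          ?_, ?_, ?_⟩
        · rw [qq_congr (k+1) _ u (fun i h1 h2 => by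
            beta_reduce; rw [if_neg (by omega), if_neg (by omega)])]
          exact hu0
        · beta_reduce
          rw [if_pos rfl]
        · rw [qq_rec k]
          rw [qq_congr (k+1) _ u (fun i h1 h2 => by
            beta_reduce; rw [if_neg (by omega), if_neg (by omega)]), hu0]
          rw [if_neg (show ¬(k+2 = k+3) by omega), if_pos rfl]
          rw [show qq k (fun i => if i = k+3 then (0:ℂ) else if i = k+2 then (1 - K) / cc (k+2)
              else u i) = K - cc (k+3) by
            rw [hKdef, qq_congr k _ (fun i => if i = k+3 then 0 else if i = k+2 then 0 else u i)
              (fun i h1 h2 => by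
                beta_reduce
                rw [if_neg (by omega), if_neg (by omega), if_neg (by omega), if_neg (by omega)])]
            ring]
          rw [zero_add, div_mul_cancel₀ _ (cc_ne_zero (k+2))]
          ring
      have hwsX : ws ∈ X := by
        show qq (k+3) ws = 0
        rw [hA, hwsA, hwsn]; ring
      -- S'-connectivity
      have sub2 : ∀ s s' : ℕ → ℂ, qq (k+1) s = 0 → s (k+3) = 0 →
          qq (k+1) s' = 0 → s' (k+3) = 0 → JoinedIn X s s' := by
        intro s s' hs hsn hs' hsn'
        obtain ⟨γ, hγ⟩ := (id hIH : IsPathConnected _).joinedIn s hs s' hs'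
        apply joinedIn_of_exists (f := fun t => fun i => if i = k+3 then 0 else γ t i)
        · refine continuous_pi fun i => ?_
          by_cases h : i = k+3
          · simp only [h, if_pos rfl]
            exact continuous_const
          · simp only [h, if_false]
            exact (continuous_apply i).comp γ.continuous
        · funext i
          by_cases h : i = k+3
          · subst h; rw [if_pos rfl]; exact hsn.symm
          · rw [if_neg h]; exact congrFun γ.source i
        · funext i
          by_cases h : i = k+3
          · subst h; rw [if_pos rfl]; exact hsn'.symm
          · rw [if_neg h]; exact congrFun γ.target i
        · intro t
          show qq (k+3) _ = 0
          rw [hA]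
          have e1 : qq (k+1) (fun i => if i = k+3 then 0 else γ t i) = qq (k+1) (γ t) :=
            qq_congr _ _ _ (fun i h1 h2 => by simp [show i ≠ k+3 by omega])
          rw [e1, if_pos rfl, show qq (k+1) (γ t) = 0 from hγ t]; ring
      -- case 1 : A = 0, shrink the last coordinate
      have sub1 : ∀ x : ℕ → ℂ, x ∈ X → qq (k+1) x = 0 →
          JoinedIn X x (fun i => if i = k+3 then 0 else x i) := by
        intro x hx hAx
        have hxB : x (k+3) * (qq (k+2) x + cc (k+3)) = 0 := by
          have h := hx
          rw [Set.mem_setOf_eq, hA, hAx, zero_add] at h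
          exact h
        apply joinedIn_of_exists
          (f := fun t => fun i => if i = k+3 then (1 - ((t:ℝ):ℂ)) * x (k+3) else x i)
        · refine continuous_pi fun i => ?_
          by_cases h : i = k+3
          · simp only [h, if_pos rfl]
            exact ((continuous_const.sub
              (Complex.continuous_ofReal.comp continuous_subtype_val)).mul continuous_const)
          · simp only [h, if_false]
            exact continuous_const
        · funext i
          by_cases h : i = k+3
          · subst h; rw [if_pos rfl]; norm_num [Set.Icc.coe_zero]
          · rw [if_neg h]
        · funext i
          by_cases h : i = k+3
          · subst h; rw [if_pos rfl]; norm_num [Set.Icc.coe_one]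
          · simp [h]
        · intro t
          show qq (k+3) _ = 0
          rw [hA]
          have e1 : qq (k+1) (fun i => if i = k+3 then (1 - ((t:ℝ):ℂ)) * x (k+3) else x i)
              = qq (k+1) x :=
            qq_congr _ _ _ (fun i h1 h2 => by simp [show i ≠ k+3 by omega])
          have e2 : qq (k+2) (fun i => if i = k+3 then (1 - ((t:ℝ):ℂ)) * x (k+3) else x i)
              = qq (k+2) x :=
            qq_congr _ _ _ (fun i h1 h2 => by simp [show i ≠ k+3 by omega])
          rw [e1, e2, if_pos rfl, hAx]
          calc (0:ℂ) + (1 - ((t:ℝ):ℂ)) * x (k+3) * (qq (k+2) x + cc (k+3))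
              = (1 - ((t:ℝ):ℂ)) * (x (k+3) * (qq (k+2) x + cc (k+3))) := by ring
            _ = 0 := by rw [hxB]; ring
      -- case 2 : A ≠ 0, travel along a line avoiding zeros of B
      have sub3 : ∀ x : ℕ → ℂ, x ∈ X → qq (k+1) x ≠ 0 → JoinedIn X x ws := by
        intro x hx hAx
        have hxeq : qq (k+1) x + x (k+3) * (qq (k+2) x + cc (k+3)) = 0 := by
          have h := hx; rw [Set.mem_setOf_eq, hA] at h; exact h
        have hBx : qq (k+2) x + cc (k+3) ≠ 0 := by
          intro h
          apply hAx
          rw [h, mul_zero, add_zero] at hxeq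
          exact hxeq
        obtain ⟨G0, hG0⟩ := qq_line_poly (k+2) x ws
        set G : Polynomial ℂ := G0 + Polynomial.C (cc (k+3)) with hGdef
        set L : ℂ → ℕ → ℂ := fun s i => x i + s * (ws i - x i) with hLdef
        have hGeval : ∀ s : ℂ, G.eval s = qq (k+2) (L s) + cc (k+3) := by
          intro s; rw [hGdef]; simp [hG0 s, hLdef]
        have hL0 : L 0 = x := by funext i; simp [hLdef]
        have hL1 : L 1 = ws := by funext i; simp [hLdef]
        have hG0x : G.eval 0 = qq (k+2) x + cc (k+3) := by rw [hGeval, hL0]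
        have hG1x : G.eval 1 = 1 := by rw [hGeval, hL1, hwsB]
        have hGne : G ≠ 0 := by
          intro h
          rw [h, Polynomial.eval_zero] at hG0x
          exact hBx hG0x.symm
        have hroots : Set.Countable {t : ℂ | G.IsRoot t} :=
          (Polynomial.finite_setOf_isRoot hGne).countable
        have hpc : IsPathConnected {t : ℂ | G.IsRoot t}ᶜ :=
          hroots.isPathConnected_compl_of_one_lt_rank complex_rank
        have h0mem : (0:ℂ) ∈ {t : ℂ | G.IsRoot t}ᶜ := by
          simp only [Set.mem_compl_iff, Set.mem_setOf_eq, Polynomial.IsRoot]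
          rw [hG0x]; exact hBx
        have h1mem : (1:ℂ) ∈ {t : ℂ | G.IsRoot t}ᶜ := by
          simp only [Set.mem_compl_iff, Set.mem_setOf_eq, Polynomial.IsRoot]
          rw [hG1x]; norm_num
        obtain ⟨σ, hσ⟩ := hpc.joinedIn 0 h0mem 1 h1mem
        have hσne : ∀ t, qq (k+2) (L (σ t)) + cc (k+3) ≠ 0 := by
          intro t
          rw [← hGeval]
          exact hσ t
        apply joinedIn_of_exists
          (f := fun t => fun i => if i = k+3 then
            -(qq (k+1) (L (σ t))) / (qq (k+2) (L (σ t)) + cc (k+3)) else L (σ t) i)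
        · have hLc : Continuous (fun t : unitInterval => L (σ t)) :=
            continuous_pi fun i => continuous_const.add (σ.continuous.mul continuous_const)
          refine continuous_pi fun i => ?_
          by_cases h : i = k+3
          · simp only [h, if_pos rfl]
            exact (((qq_continuous (k+1)).comp hLc).neg).div
              (((qq_continuous (k+2)).comp hLc).add continuous_const) hσne
          · simp only [h, if_false]
            exact (continuous_apply i).comp hLc
        · funext i
          by_cases h : i = k+3
          · subst h; rw [if_pos rfl, σ.source, hL0, div_eq_iff hBx]
            linear_combination -hxeq
          · rw [if_neg h, σ.source, hL0]
        · funext i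
          by_cases h : i = k+3
          · subst h; rw [if_pos rfl, σ.target, hL1, hwsA, hwsB, hwsn]
            norm_num
          · rw [if_neg h, σ.target, hL1]
        · intro t
          show qq (k+3) _ = 0
          rw [hA]
          have e1 : qq (k+1) (fun i => if i = k+3 then
              -(qq (k+1) (L (σ t))) / (qq (k+2) (L (σ t)) + cc (k+3)) else L (σ t) i)
              = qq (k+1) (L (σ t)) :=
            qq_congr _ _ _ (fun i h1 h2 => by simp [show i ≠ k+3 by omega])
          have e2 : qq (k+2) (fun i => if i = k+3 then
              -(qq (k+1) (L (σ t))) / (qq (k+2) (L (σ t)) + cc (k+3)) else L (σ t) i)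
              = qq (k+2) (L (σ t)) :=
            qq_congr _ _ _ (fun i h1 h2 => by simp [show i ≠ k+3 by omega])
          rw [e1, e2, if_pos rfl, div_mul_cancel₀ _ (hσne t)]
          ring
      -- assemble
      have tows : ∀ x ∈ X, JoinedIn X x ws := by
        intro x hx
        by_cases hAx : qq (k+1) x = 0
        · refine (sub1 x hx hAx).trans ?_
          refine sub2 _ _ ?_ ?_ hwsA hwsn
          · rw [qq_congr (k+1) _ x (fun i h1 h2 => by simp [show i ≠ k+3 by omega])]
            exact hAx
          · simp
        · exact sub3 x hx hAx
      rw [isPathConnected_iff]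
      exact ⟨⟨ws, hwsX⟩, fun x hx y hy => (tows x hx).trans (tows y hy).symm⟩

lemma ext_truncate (k : ℕ) (w : ℕ → ℂ) (i : ℕ) (h1 : 1 ≤ i) (h2 : i ≤ k+3) :
    ext (k+3) (fun j : Fin (k+3) => w ((j:ℕ)+1)) i = w i := by
  simp only [_root_.ext]
  rw [dif_pos ⟨h1, h2⟩]
  show w (i - 1 + 1) = w i
  congr 1
  omega

theorem stmt12 (n : ℕ) (hn : 3 ≤ n) : IsPathConnected (Xset n) := by
  obtain ⟨k, rfl⟩ : ∃ k, n = k + 3 := ⟨n - 3, by omega⟩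
  have hmain := main_pc (k+3) (by omega)
  have hTX : ∀ w : ℕ → ℂ, qq (k+3) w = 0 →
      (fun i : Fin (k+3) => w ((i:ℕ)+1)) ∈ Xset (k+3) := by
    intro w hw
    show qq (k+3) (ext (k+3) (fun i : Fin (k+3) => w ((i:ℕ)+1))) = 0
    rw [qq_congr (k+3) _ w (fun i h1 h2 => ext_truncate k w i h1 h2)]
    exact hw
  have hTe : ∀ z : Fin (k+3) → ℂ,
      (fun i : Fin (k+3) => (ext (k+3) z) ((i:ℕ)+1)) = z := by
    intro z; funext i
    simp only [_root_.ext]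
    rw [dif_pos ⟨by omega, by omega⟩]
    congr 1
  have hmem : ∀ z ∈ Xset (k+3), ext (k+3) z ∈ {w : ℕ → ℂ | qq (k+3) w = 0} := by
    intro z hz; exact hz
  rw [isPathConnected_iff]
  obtain ⟨w0, hw0, -⟩ := id hmain
  refine ⟨⟨_, hTX w0 hw0⟩, ?_⟩
  intro x hx y hy
  obtain ⟨γ, hγ⟩ := (id hmain : IsPathConnected _).joinedIn (ext (k+3) x) (hmem x hx) (ext (k+3) y) (hmem y hy)
  apply joinedIn_of_exists (f := fun t => fun i : Fin (k+3) => γ t ((i:ℕ)+1))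
  · exact continuous_pi fun i => (continuous_apply _).comp γ.continuous
  · rw [show γ (0:unitInterval) = ext (k+3) x from γ.source]; exact hTe x
  · rw [show γ (1:unitInterval) = ext (k+3) y from γ.target]; exact hTe y
  · intro t
    exact hTX (γ t) (hγ t)
end
end
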